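/- Let ρ0 and ρ1 be quantum states on ℂ^d with full support, and let S be a sequential quantum probability ratio test (SQPRT) with parameters A > 0 and B > 0 whose stopping time T satisfies P_0(T < ∞) = P_1(T < ∞) = 1. Then the error probabilities satisfy α = P_0(S_T ≤ −A) ≤ e^{−A} and β = P_1(S_T ≥ B) ≤ e^{−B}. -/

import Mathlib

/-!
Since both states have full support, an outcome has positive probability under `ρ0` iff it does
under `ρ1`, so the law of the first `k` (measurement, outcome) pairs under `ρ0` has density
`exp S_k` with respect to the law under `ρ1`: the adaptively chosen measurements are drawn from the
same kernels under both hypotheses and cancel from the ratio. On the event that the test stops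
after `k` observations declaring hypothesis 1 we have `S_k ≤ -A`, so its `ρ0`-probability is at
most `e^{-A}` times its `ρ1`-probability. These events are disjoint in `k`, hence their
`ρ1`-probabilities sum to at most `1`, giving `α ≤ e^{-A}`; exchanging the states gives
`β ≤ e^{-B}`.
-/

open MeasureTheory ProbabilityTheory Filter
open scoped ENNReal NNReal Topology ComplexOrder

namespace SQHT

/-- `d × d` complex matrices over an index type `ι`. -/
abbrev Mat (ι : Type) := Matrix ι ι ℂ

noncomputable instance (ι : Type) : MeasurableSpace (Mat ι) :=
  inferInstanceAs (MeasurableSpace (ι → ι → ℂ))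

variable {ι : Type} [Fintype ι] [DecidableEq ι]

/-- A quantum state: positive semidefinite with unit trace. -/
def IsState (ρ : Mat ι) : Prop := ρ.PosSemidef ∧ ρ.trace = 1

/-- A POVM with finite outcome set `Fin N`. -/
def IsPOVM {N : ℕ} (m : Fin N → Mat ι) : Prop :=
  (∀ x, (m x).PosSemidef) ∧ ∑ x, m x = 1

/-- The (compact) space of POVMs on `ℂ^ι` with outcome set `Fin N`. -/
abbrev POVM (ι : Type) [Fintype ι] [DecidableEq ι] (N : ℕ) :=
  {m : Fin N → Mat ι // IsPOVM m}

/-- Born probability of outcome `x` when measuring `m` on state `ρ`. -/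
noncomputable def outProb (ρ : Mat ι) {X : Type*} (m : X → Mat ι) (x : X) : ℝ :=
  ((ρ * m x).trace).re

/-- Classical relative entropy (KL divergence) of two pmfs on a finite set,
with the convention `0 log 0 = 0`. -/
noncomputable def KL {X : Type*} [Fintype X] (P Q : X → ℝ) : ℝ :=
  ∑ x, if P x = 0 then 0 else P x * Real.log (P x / Q x)

/-- A rank-one projective measurement with `|ι|` outcomes. -/
def IsRankOnePVM (m : ι → Mat ι) : Prop :=
  (∀ x, (m x).PosSemidef) ∧ ∑ x, m x = 1 ∧ (∀ x, m x * m x = m x) ∧ ∀ x, (m x).rank = 1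

/-- The measured relative entropy `D_M(ρ0‖ρ1)`: supremum of classical relative
entropies over rank-one PVMs with `|ι|` outcomes. -/
noncomputable def Dmeas (ρ0 ρ1 : Mat ι) : ℝ :=
  ⨆ m : {m : ι → Mat ι // IsRankOnePVM m}, KL (outProb ρ0 m.1) (outProb ρ1 m.1)

/-- Histories of `k` (measurement, outcome) pairs. -/
abbrev Hist (ι : Type) [Fintype ι] [DecidableEq ι] (N k : ℕ) := Fin k → POVM ι N × Fin N

/-- Infinite trajectories of (measurement, outcome) pairs. -/
abbrev Traj (ι : Type) [Fintype ι] [DecidableEq ι] (N : ℕ) := ℕ → POVM ι N × Fin N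

/-- A sequential quantum hypothesis test: a finite outcome set `Fin N`,
adaptive measurement strategies given by kernels from histories to POVMs,
and decision functions. `dec k` is the decision after `k+1` observations:
`none` means continue (`*`), `some false` accepts hypothesis 0, `some true` accepts 1. -/
structure SQHTtest (ι : Type) [Fintype ι] [DecidableEq ι] where
  N : ℕ
  μ : (k : ℕ) → Kernel (Hist ι N k) (POVM ι N)
  markov : ∀ k, IsMarkovKernel (μ k)
  dec : (k : ℕ) → Hist ι N (k + 1) → Option Bool
  dec_meas : ∀ k o, MeasurableSet {h : Hist ι N (k + 1) | dec k h = o}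

/-- The law of the outcome of measuring POVM `m` on state `ρ` (Born's rule). -/
noncomputable def outMeasure (ρ : Mat ι) {N : ℕ} (m : POVM ι N) : Measure (Fin N) :=
  ∑ x, (ENNReal.ofReal (outProb ρ m.1 x)) • Measure.dirac x

/-- The joint law of the first `k` (measurement, outcome) pairs when the
underlying state is `ρ`: `P[(A × x_1^k) × ⋯] = ∫_A ∏_j μ_j(dm_j|⋯) Tr[ρ m_j(x_j)]`. -/
noncomputable def stepLaw (ρ : Mat ι) {N : ℕ}
    (μ : (k : ℕ) → Kernel (Hist ι N k) (POVM ι N)) :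
    (k : ℕ) → Measure (Hist ι N k)
  | 0 => Measure.dirac (fun i => i.elim0)
  | (k + 1) => (stepLaw ρ μ k).bind fun h =>
      ((μ k) h).bind fun m => (outMeasure ρ m).map (fun x => Fin.snoc h (m, x))

/-- Restriction of a trajectory to its first `k` steps. -/
def pref {N : ℕ} (k : ℕ) (ω : Traj ι N) : Hist ι N k := fun i => ω i

/-- `P` is the law of the trajectory process of test `S` on state `ρ`. -/
def IsLaw (ρ : Mat ι) (S : SQHTtest ι) (P : Measure (Traj ι S.N)) : Prop :=
  IsProbabilityMeasure P ∧ ∀ k, P.map (pref k) = stepLaw ρ S.μ k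

/-- The test stops for the first time after `k+1` observations, declaring `b`. -/
def decidesAt (S : SQHTtest ι) (ω : Traj ι S.N) (k : ℕ) (b : Bool) : Prop :=
  (∀ j, j < k → S.dec j (pref (j + 1) ω) = none) ∧ S.dec k (pref (k + 1) ω) = some b

/-- Error of the first kind: probability (under `ρ0`) of declaring hypothesis 1. -/
noncomputable def errA (S : SQHTtest ι) (P0 : Measure (Traj ι S.N)) : ℝ≥0∞ :=
  P0 {ω | ∃ k, decidesAt S ω k true}

/-- Error of the second kind: probability (under `ρ1`) of declaring hypothesis 0. -/
noncomputable def errB (S : SQHTtest ι) (P1 : Measure (Traj ι S.N)) : ℝ≥0∞ :=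
  P1 {ω | ∃ k, decidesAt S ω k false}

/-- The stopping time `T` (number of samples used), as an extended real so that
`T = ∞` when the test never stops. `dec k` is the decision after `k+1` samples. -/
noncomputable def stopTime (S : SQHTtest ι) (ω : Traj ι S.N) : ℝ≥0∞ :=
  sInf {n : ℝ≥0∞ | ∃ k : ℕ, n = (k : ℝ≥0∞) + 1 ∧ S.dec k (pref (k + 1) ω) ≠ none}

/-- Expected number of samples. -/
noncomputable def expT (S : SQHTtest ι) (P : Measure (Traj ι S.N)) : ℝ≥0∞ :=
  ∫⁻ ω, stopTime S ω ∂P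

/-- Logarithm on `ℝ≥0∞` with values in `EReal` (`log 0 = ⊥`, `log ∞ = ⊤`). -/
noncomputable def elog (x : ℝ≥0∞) : EReal :=
  if x = 0 then ⊥ else if x = ∞ then ⊤ else ((Real.log x.toReal : ℝ) : EReal)

/-- `(R0, R1)` is an achievable error-exponent pair under the expectation
constraint, for discriminating `ρ0` from `ρ1`, with exponents normalized by
`n * l` (`l` is the block length; `l = 1` for single-copy tests). -/
def AchievableE (ρ0 ρ1 : Mat ι) (l : ℕ) (R : ℝ × ℝ) : Prop :=
  0 ≤ R.1 ∧ 0 ≤ R.2 ∧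
  ∃ (S : ℕ → SQHTtest ι) (P0 P1 : (n : ℕ) → Measure (Traj ι (S n).N)),
    (∀ n, IsLaw ρ0 (S n) (P0 n)) ∧ (∀ n, IsLaw ρ1 (S n) (P1 n)) ∧
    (R.1 : EReal) ≤ atTop.liminf
      (fun n : ℕ => ((((n * l : ℕ) : ℝ)⁻¹ : ℝ) : EReal) * (- elog (errA (S n) (P0 n)))) ∧
    (R.2 : EReal) ≤ atTop.liminf
      (fun n : ℕ => ((((n * l : ℕ) : ℝ)⁻¹ : ℝ) : EReal) * (- elog (errB (S n) (P1 n)))) ∧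
    atTop.limsup (fun n : ℕ =>
      (max (expT (S n) (P0 n)) (expT (S n) (P1 n)) : ℝ≥0∞).toEReal - (((n : ℝ)) : EReal)) ≤ 0

/-- `(R0, R1)` is an `ε`-achievable error-exponent pair under the probabilistic
constraint. -/
def AchievableP (ρ0 ρ1 : Mat ι) (l : ℕ) (ε : ℝ) (R : ℝ × ℝ) : Prop :=
  0 ≤ R.1 ∧ 0 ≤ R.2 ∧
  ∃ (S : ℕ → SQHTtest ι) (P0 P1 : (n : ℕ) → Measure (Traj ι (S n).N)),
    (∀ n, IsLaw ρ0 (S n) (P0 n)) ∧ (∀ n, IsLaw ρ1 (S n) (P1 n)) ∧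
    (R.1 : EReal) ≤ atTop.liminf
      (fun n : ℕ => ((((n * l : ℕ) : ℝ)⁻¹ : ℝ) : EReal) * (- elog (errA (S n) (P0 n)))) ∧
    (R.2 : EReal) ≤ atTop.liminf
      (fun n : ℕ => ((((n * l : ℕ) : ℝ)⁻¹ : ℝ) : EReal) * (- elog (errB (S n) (P1 n)))) ∧
    atTop.limsup (fun n : ℕ =>
      max ((P0 n) {ω | (n : ℝ≥0∞) < stopTime (S n) ω})
          ((P1 n) {ω | (n : ℝ≥0∞) < stopTime (S n) ω})) < ENNReal.ofReal ε

end SQHT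

namespace SQHT

variable {ι : Type} [Fintype ι] [DecidableEq ι]

/-- Log-likelihood ratio of a single (measurement, outcome) pair. -/
noncomputable def Zfun (ρ0 ρ1 : Mat ι) {N : ℕ} (p : POVM ι N × Fin N) : ℝ :=
  Real.log (outProb ρ0 p.1.1 p.2) - Real.log (outProb ρ1 p.1.1 p.2)

/-- Accumulated log-likelihood ratio `S_k = ∑_{j=1}^k Z_j`. -/
noncomputable def Sfun (ρ0 ρ1 : Mat ι) {N : ℕ} (k : ℕ) (ω : Traj ι N) : ℝ :=
  ∑ j ∈ Finset.range k, Zfun ρ0 ρ1 (ω j)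

/-- The natural filtration `F_k = σ(M_1^k, X_1^k)` of the trajectory process. -/
noncomputable def trajFiltration (ι : Type) [Fintype ι] [DecidableEq ι] (N : ℕ) :
    Filtration ℕ (inferInstance : MeasurableSpace (Traj ι N)) where
  seq k := MeasurableSpace.comap (pref (ι := ι) (N := N) k) inferInstance
  mono' := by
    intro i j hij
    have hcomp : pref (ι := ι) (N := N) i =
        (fun h : Hist ι N j => fun t : Fin i => h (Fin.castLE hij t)) ∘
          pref (ι := ι) (N := N) j := rfl
    show MeasurableSpace.comap (pref (ι := ι) (N := N) i) inferInstance ≤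
      MeasurableSpace.comap (pref (ι := ι) (N := N) j) inferInstance
    rw [hcomp, ← MeasurableSpace.comap_comp]
    exact MeasurableSpace.comap_mono
      ((measurable_pi_lambda _ fun t => measurable_pi_apply _).comap_le)
  le' := fun k => (measurable_pi_lambda _ fun i => measurable_pi_apply _).comap_le

end SQHT

namespace SQHT

variable {ι : Type} [Fintype ι] [DecidableEq ι]

/-- An SQHT is a sequential quantum probability ratio test (SQPRT) with parameters
`A, B > 0` if it stops and accepts hypothesis 0 as soon as `S_k ≥ B`, stops and
accepts hypothesis 1 as soon as `S_k ≤ −A`, and continues otherwise. -/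
def IsSQPRT (ρ0 ρ1 : Mat ι) (S : SQHTtest ι) (A B : ℝ) : Prop :=
  ∀ (k : ℕ) (h : Hist ι S.N (k + 1)),
    S.dec k h =
      if B ≤ ∑ i, Zfun ρ0 ρ1 (h i) then some false
      else if (∑ i, Zfun ρ0 ρ1 (h i)) ≤ -A then some true
      else none

end SQHT

namespace Matrix

open scoped MatrixOrder

variable {𝕜 n : Type*} [RCLike 𝕜] [Fintype n] [DecidableEq n] {A B : Matrix n n 𝕜}

theorem PosSemidef.trace_mul_nonneg (hA : A.PosSemidef) (hB : B.PosSemidef) :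
    0 ≤ (A * B).trace := by
  obtain ⟨b, rfl⟩ := CStarAlgebra.nonneg_iff_eq_star_mul_self.mp hB.nonneg
  rw [← Matrix.mul_assoc, trace_mul_cycle]
  exact (hA.mul_mul_conjTranspose_same b).trace_nonneg

theorem PosDef.trace_mul_pos (hA : A.PosDef) (hB : B.PosSemidef) (hB0 : B ≠ 0) :
    0 < (A * B).trace := by
  refine (hA.posSemidef.trace_mul_nonneg hB).lt_of_ne' fun h => hB0 ?_
  obtain ⟨a, ha, rfl⟩ := CStarAlgebra.isStrictlyPositive_iff_eq_star_mul_self.mp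
    hA.isStrictlyPositive
  obtain ⟨b, rfl⟩ := CStarAlgebra.nonneg_iff_eq_star_mul_self.mp hB.nonneg
  have htrace : (star a * a * (star b * b)).trace = ((a * star b) * (a * star b)ᴴ).trace := by
    simp only [conjTranspose_mul, star_eq_conjTranspose, conjTranspose_conjTranspose]
    rw [← trace_mul_cycle]
    simp only [Matrix.mul_assoc]
  rw [htrace, trace_mul_conjTranspose_self_eq_zero_iff, ha.mul_right_eq_zero, star_eq_zero] at h
  simp [h]

end Matrix

namespace SQHT

section BornRule

variable {ι : Type} [Fintype ι] [DecidableEq ι] {ρ ρ0 ρ1 : Mat ι} {N : ℕ}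

theorem outProb_pos {X : Type*} {m : X → Mat ι} {x : X} (hρ : ρ.PosDef)
    (hm : (m x).PosSemidef) (hmx : m x ≠ 0) : 0 < outProb ρ m x :=
  (Complex.pos_iff.mp (hρ.trace_mul_pos hm hmx)).1

/-- When `m x = 0` both sides vanish, whatever junk value `Zfun` takes there. -/
theorem outProb_eq_exp_Zfun_mul (hρ0 : ρ0.PosDef) (hρ1 : ρ1.PosDef) (p : POVM ι N × Fin N) :
    outProb ρ0 p.1.1 p.2 = Real.exp (Zfun ρ0 ρ1 p) * outProb ρ1 p.1.1 p.2 := by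
  obtain ⟨m, x⟩ := p
  by_cases hmx : m.1 x = 0
  · simp [outProb, hmx]
  · have hp0 := outProb_pos hρ0 (m.2.1 x) hmx
    have hp1 := outProb_pos hρ1 (m.2.1 x) hmx
    rw [Zfun, Real.exp_sub, Real.exp_log hp0, Real.exp_log hp1, div_mul_cancel₀ _ hp1.ne']

theorem Zfun_swap (ρ0 ρ1 : Mat ι) (p : POVM ι N × Fin N) : Zfun ρ1 ρ0 p = -Zfun ρ0 ρ1 p := by
  simp [Zfun]

theorem measurable_outProb (ρ : Mat ι) (x : Fin N) :
    Measurable fun m : POVM ι N => outProb ρ m.1 x := by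
  have hentry : ∀ i j, Measurable fun m : POVM ι N => m.1 x i j := fun i j =>
    (measurable_pi_apply j).comp ((measurable_pi_apply i).comp
      ((measurable_pi_apply x).comp measurable_subtype_coe))
  simp only [outProb, Matrix.trace, Matrix.diag, Matrix.mul_apply, Complex.re_sum]
  exact Finset.measurable_sum _ fun i _ => Finset.measurable_sum _ fun j _ =>
    Complex.measurable_re.comp (measurable_const.mul (hentry j i))

theorem measurable_Zfun (ρ0 ρ1 : Mat ι) : Measurable (Zfun ρ0 ρ1 : POVM ι N × Fin N → ℝ) :=
  measurable_from_prod_countable_left fun x =>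
    (Real.measurable_log.comp (measurable_outProb ρ0 x)).sub
      (Real.measurable_log.comp (measurable_outProb ρ1 x))

theorem lintegral_outMeasure (ρ : Mat ι) (m : POVM ι N) (f : Fin N → ℝ≥0∞) :
    ∫⁻ x, f x ∂outMeasure ρ m = ∑ x, ENNReal.ofReal (outProb ρ m.1 x) * f x := by
  simp [outMeasure]

end BornRule

section StepLaw

variable {ι : Type} [Fintype ι] [DecidableEq ι] {N k : ℕ}

theorem measurable_snoc_pair (x : Fin N) :
    Measurable fun p : Hist ι N k × POVM ι N => (Fin.snoc p.1 (p.2, x) : Hist ι N (k + 1)) := by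
  refine measurable_pi_lambda _ fun i => ?_
  induction i using Fin.lastCases with
  | last => simpa using measurable_snd.prodMk measurable_const
  | cast j =>
    simp only [Fin.snoc_castSucc]
    exact (measurable_pi_apply j).comp measurable_fst

noncomputable def nextMean (ρ : Mat ι) (F : Hist ι N (k + 1) → ℝ≥0∞) (h : Hist ι N k)
    (m : POVM ι N) : ℝ≥0∞ :=
  ∑ x, ENNReal.ofReal (outProb ρ m.1 x) * F (Fin.snoc h (m, x))

theorem measurable_nextMean (ρ : Mat ι) {F : Hist ι N (k + 1) → ℝ≥0∞} (hF : Measurable F) :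
    Measurable fun p : Hist ι N k × POVM ι N => nextMean ρ F p.1 p.2 := by
  unfold nextMean
  exact Finset.measurable_sum _ fun x _ =>
    ((measurable_outProb ρ x).comp measurable_snd).ennreal_ofReal.mul
      (hF.comp (measurable_snoc_pair x))

theorem lintegral_map_outMeasure_snoc (ρ : Mat ι) (h : Hist ι N k) (m : POVM ι N)
    {F : Hist ι N (k + 1) → ℝ≥0∞} (hF : Measurable F) :
    ∫⁻ h', F h' ∂(outMeasure ρ m).map (fun x => Fin.snoc h (m, x)) = nextMean ρ F h m := by
  rw [lintegral_map hF (measurable_of_countable _), lintegral_outMeasure, nextMean]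

theorem map_outMeasure_snoc_apply (ρ : Mat ι) (h : Hist ι N k) (m : POVM ι N)
    {s : Set (Hist ι N (k + 1))} (hs : MeasurableSet s) :
    (outMeasure ρ m).map (fun x => Fin.snoc h (m, x)) s = nextMean ρ (s.indicator 1) h m := by
  rw [← lintegral_indicator_one hs,
    lintegral_map_outMeasure_snoc ρ h m (measurable_one.indicator hs)]

theorem measurable_map_outMeasure_snoc (ρ : Mat ι) (h : Hist ι N k) :
    Measurable fun m : POVM ι N =>
      (outMeasure ρ m).map (fun x => (Fin.snoc h (m, x) : Hist ι N (k + 1))) := by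
  refine Measure.measurable_of_measurable_coe _ fun s hs => ?_
  have hind : Measurable (s.indicator (1 : Hist ι N (k + 1) → ℝ≥0∞)) :=
    measurable_one.indicator hs
  simp_rw [map_outMeasure_snoc_apply ρ h _ hs]
  simpa only [Function.comp_def] using (measurable_nextMean ρ hind).comp measurable_prodMk_left

variable (ρ : Mat ι) (μ : (k : ℕ) → Kernel (Hist ι N k) (POVM ι N)) [∀ k, IsSFiniteKernel (μ k)]

theorem measurable_stepLaw_transition (k : ℕ) :
    Measurable fun h : Hist ι N k =>
      (μ k h).bind fun m =>
        (outMeasure ρ m).map (fun x => (Fin.snoc h (m, x) : Hist ι N (k + 1))) := by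
  refine Measure.measurable_of_measurable_coe _ fun s hs => ?_
  simp_rw [Measure.bind_apply hs (measurable_map_outMeasure_snoc ρ _).aemeasurable,
    map_outMeasure_snoc_apply ρ _ _ hs]
  exact (measurable_nextMean ρ (measurable_one.indicator hs)).lintegral_kernel_prod_right

theorem lintegral_stepLaw_succ {F : Hist ι N (k + 1) → ℝ≥0∞} (hF : Measurable F) :
    ∫⁻ h', F h' ∂stepLaw ρ μ (k + 1) = ∫⁻ h, ∫⁻ m, nextMean ρ F h m ∂μ k h ∂stepLaw ρ μ k := by
  rw [stepLaw, Measure.lintegral_bind (measurable_stepLaw_transition ρ μ k).aemeasurable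
    hF.aemeasurable]
  refine lintegral_congr fun h => ?_
  rw [Measure.lintegral_bind (measurable_map_outMeasure_snoc ρ h).aemeasurable hF.aemeasurable]
  exact lintegral_congr fun m => lintegral_map_outMeasure_snoc ρ h m hF

end StepLaw

section ChangeOfMeasure

variable {ι : Type} [Fintype ι] [DecidableEq ι] {ρ0 ρ1 : Mat ι} {N k : ℕ}

noncomputable def likelihoodRatio (ρ0 ρ1 : Mat ι) (h : Hist ι N k) : ℝ≥0∞ :=
  ENNReal.ofReal (Real.exp (∑ i, Zfun ρ0 ρ1 (h i)))

theorem measurable_likelihoodRatio (ρ0 ρ1 : Mat ι) :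
    Measurable (likelihoodRatio ρ0 ρ1 : Hist ι N k → ℝ≥0∞) :=
  (Real.measurable_exp.comp (Finset.measurable_sum _ fun i _ =>
    (measurable_Zfun ρ0 ρ1).comp (measurable_pi_apply i))).ennreal_ofReal

theorem likelihoodRatio_snoc (h : Hist ι N k) (p : POVM ι N × Fin N) :
    likelihoodRatio ρ0 ρ1 (Fin.snoc h p : Hist ι N (k + 1)) =
      likelihoodRatio ρ0 ρ1 h * ENNReal.ofReal (Real.exp (Zfun ρ0 ρ1 p)) := by
  simp only [likelihoodRatio, Fin.sum_univ_castSucc, Fin.snoc_castSucc, Fin.snoc_last]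
  rw [Real.exp_add, ENNReal.ofReal_mul (Real.exp_nonneg _)]

theorem likelihoodRatio_mul_nextMean (hρ0 : ρ0.PosDef) (hρ1 : ρ1.PosDef)
    (F : Hist ι N (k + 1) → ℝ≥0∞) (h : Hist ι N k) (m : POVM ι N) :
    likelihoodRatio ρ0 ρ1 h * nextMean ρ0 F h m = nextMean ρ1 (likelihoodRatio ρ0 ρ1 * F) h m := by
  simp only [nextMean, Finset.mul_sum, Pi.mul_apply, likelihoodRatio_snoc]
  refine Finset.sum_congr rfl fun x _ => ?_
  rw [outProb_eq_exp_Zfun_mul hρ0 hρ1 (m, x), ENNReal.ofReal_mul (Real.exp_nonneg _)]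
  ring

theorem stepLaw_eq_withDensity (hρ0 : ρ0.PosDef) (hρ1 : ρ1.PosDef)
    (μ : (k : ℕ) → Kernel (Hist ι N k) (POVM ι N)) [∀ k, IsSFiniteKernel (μ k)] (k : ℕ) :
    stepLaw ρ0 μ k = (stepLaw ρ1 μ k).withDensity (likelihoodRatio ρ0 ρ1) := by
  induction k with
  | zero =>
    have hL : likelihoodRatio ρ0 ρ1 (N := N) (k := 0) = 1 :=
      funext fun h => by simp [likelihoodRatio]
    rw [hL, withDensity_one]
    rfl
  | succ k ih =>
    refine Measure.ext_of_lintegral _ fun F hF => ?_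
    have hL := measurable_likelihoodRatio ρ0 ρ1 (N := N) (k := k)
    rw [lintegral_withDensity_eq_lintegral_mul _ (measurable_likelihoodRatio ρ0 ρ1) hF,
      lintegral_stepLaw_succ ρ0 μ hF, ih, lintegral_withDensity_eq_lintegral_mul _ hL
        (measurable_nextMean ρ0 hF).lintegral_kernel_prod_right,
      lintegral_stepLaw_succ ρ1 μ ((measurable_likelihoodRatio ρ0 ρ1).mul hF)]
    refine lintegral_congr fun h => ?_
    rw [Pi.mul_apply, ← lintegral_const_mul' _ _ (by exact ENNReal.ofReal_ne_top)]
    exact lintegral_congr fun m => likelihoodRatio_mul_nextMean hρ0 hρ1 F h m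

theorem stepLaw_le_exp_mul (hρ0 : ρ0.PosDef) (hρ1 : ρ1.PosDef)
    (μ : (k : ℕ) → Kernel (Hist ι N k) (POVM ι N)) [∀ k, IsSFiniteKernel (μ k)]
    {C : Set (Hist ι N k)} (hC : MeasurableSet C) {c : ℝ}
    (hle : ∀ h ∈ C, ∑ i, Zfun ρ0 ρ1 (h i) ≤ c) :
    stepLaw ρ0 μ k C ≤ ENNReal.ofReal (Real.exp c) * stepLaw ρ1 μ k C := by
  rw [stepLaw_eq_withDensity hρ0 hρ1 μ k, withDensity_apply _ hC, ← setLIntegral_const]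
  exact setLIntegral_mono measurable_const fun h hh =>
    ENNReal.ofReal_le_ofReal (Real.exp_le_exp.mpr (hle h hh))

end ChangeOfMeasure

section Decisions

variable {ι : Type} [Fintype ι] [DecidableEq ι] {S : SQHTtest ι}

theorem measurable_pref {N : ℕ} (k : ℕ) : Measurable (pref (ι := ι) (N := N) k) :=
  measurable_pi_lambda _ fun _ => measurable_pi_apply _

theorem Sfun_eq_sum_pref (ρ0 ρ1 : Mat ι) {N : ℕ} (k : ℕ) (ω : Traj ι N) :
    Sfun ρ0 ρ1 k ω = ∑ i, Zfun ρ0 ρ1 (pref k ω i) :=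
  (Fin.sum_univ_eq_sum_range (fun j => Zfun ρ0 ρ1 (ω j)) k).symm

theorem decidesAt.index_eq {ω : Traj ι S.N} {k k' : ℕ} {b b' : Bool}
    (h : decidesAt S ω k b) (h' : decidesAt S ω k' b') : k = k' := by
  by_contra hne
  rcases lt_or_gt_of_ne hne with hlt | hlt
  · exact Option.some_ne_none b (h.2.symm.trans (h'.1 k hlt))
  · exact Option.some_ne_none b' (h'.2.symm.trans (h.1 k' hlt))

theorem measurableSet_decidesAt (k : ℕ) (b : Bool) :
    MeasurableSet[trajFiltration ι S.N (k + 1)] {ω | decidesAt S ω k b} := by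
  have hdec : ∀ j o, j ≤ k →
      MeasurableSet[trajFiltration ι S.N (k + 1)] {ω | S.dec j (pref (j + 1) ω) = o} :=
    fun j o hj => (trajFiltration ι S.N).mono (Nat.succ_le_succ hj) _ ⟨_, S.dec_meas j o, rfl⟩
  simp only [decidesAt, Set.ofPred_and, Set.ofPred_forall]
  exact (MeasurableSet.iInter fun j => MeasurableSet.iInter fun hj => hdec j none hj.le).inter
    (hdec k (some b) le_rfl)

theorem measure_exists_decidesAt_le {ρ σ : Mat ι} (hρ : ρ.PosDef) (hσ : σ.PosDef)
    {P Q : Measure (Traj ι S.N)} (hP : IsLaw ρ S P) (hQ : IsLaw σ S Q) {b : Bool} {c : ℝ}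
    (hdec : ∀ k h, S.dec k h = some b → ∑ i, Zfun ρ σ (h i) ≤ c) :
    P {ω | ∃ k, decidesAt S ω k b} ≤ ENNReal.ofReal (Real.exp c) := by
  have := S.markov
  have := hQ.1
  set E : ℕ → Set (Traj ι S.N) := fun k => {ω | decidesAt S ω k b}
  have hE_meas : ∀ k, MeasurableSet (E k) :=
    fun k => (trajFiltration ι S.N).le _ _ (measurableSet_decidesAt k b)
  have hE_disj : Pairwise (Function.onFun Disjoint E) :=
    fun k k' hne => Set.disjoint_left.mpr fun ω h h' => hne (h.index_eq h')
  have hE_le : ∀ k, P (E k) ≤ ENNReal.ofReal (Real.exp c) * Q (E k) := by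
    intro k
    obtain ⟨C, hC, hCE⟩ := measurableSet_decidesAt (S := S) k b
    set D := C ∩ {h | S.dec k h = some b}
    have hD : MeasurableSet D := hC.inter (S.dec_meas k (some b))
    have hDE : pref (k + 1) ⁻¹' D = E k := by
      rw [Set.preimage_inter, hCE]
      exact Set.inter_eq_left.mpr fun ω hω => hω.2
    rw [← hDE, ← Measure.map_apply (measurable_pref _) hD,
      ← Measure.map_apply (measurable_pref _) hD, hP.2, hQ.2]
    exact stepLaw_le_exp_mul hρ hσ S.μ hD fun h hh => hdec k h hh.2
  rw [Set.ofPred_exists]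
  calc P (⋃ k, E k) = ∑' k, P (E k) := measure_iUnion hE_disj hE_meas
    _ ≤ ∑' k, ENNReal.ofReal (Real.exp c) * Q (E k) := ENNReal.tsum_le_tsum hE_le
    _ = ENNReal.ofReal (Real.exp c) * Q (⋃ k, E k) := by
      rw [ENNReal.tsum_mul_left, measure_iUnion hE_disj hE_meas]
    _ ≤ ENNReal.ofReal (Real.exp c) := mul_le_of_le_one_right' prob_le_one

end Decisions

section SQPRT

variable {ι : Type} [Fintype ι] [DecidableEq ι] {ρ0 ρ1 : Mat ι} {S : SQHTtest ι} {A B : ℝ}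

theorem IsSQPRT.dec_eq_some_true_iff (hS : IsSQPRT ρ0 ρ1 S A B) (hAB : -A < B) {k : ℕ}
    (h : Hist ι S.N (k + 1)) :
    S.dec k h = some true ↔ S.dec k h ≠ none ∧ ∑ i, Zfun ρ0 ρ1 (h i) ≤ -A := by
  rw [hS k h]
  split_ifs with hB' hA'
  · simp only [Option.some.injEq, Bool.false_eq_true, false_iff, not_and, not_le]
    exact fun _ => hAB.trans_le hB'
  · simp [hA']
  · simp [hA']

theorem IsSQPRT.dec_eq_some_false_iff (hS : IsSQPRT ρ0 ρ1 S A B) {k : ℕ}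
    (h : Hist ι S.N (k + 1)) :
    S.dec k h = some false ↔ S.dec k h ≠ none ∧ B ≤ ∑ i, Zfun ρ0 ρ1 (h i) := by
  rw [hS k h]
  split_ifs with hB' <;> simp [hB']

end SQPRT

theorem sqprt_error_bounds_general
    (d : ℕ) (ρ0 ρ1 : Mat (Fin d))
    (hfs0 : ρ0.PosDef) (hfs1 : ρ1.PosDef)
    (S : SQHTtest (Fin d)) (A B : ℝ) (hA : 0 < A) (hB : 0 < B)
    (hsprt : IsSQPRT ρ0 ρ1 S A B)
    (P0 P1 : Measure (Traj (Fin d) S.N))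
    (hP0 : IsLaw ρ0 S P0) (hP1 : IsLaw ρ1 S P1) :
    (errA S P0 = P0 {ω | ∃ k, (∀ j, j < k → S.dec j (pref (j + 1) ω) = none) ∧
        S.dec k (pref (k + 1) ω) ≠ none ∧ Sfun ρ0 ρ1 (k + 1) ω ≤ -A} ∧
      errA S P0 ≤ ENNReal.ofReal (Real.exp (-A))) ∧
    (errB S P1 = P1 {ω | ∃ k, (∀ j, j < k → S.dec j (pref (j + 1) ω) = none) ∧
        S.dec k (pref (k + 1) ω) ≠ none ∧ B ≤ Sfun ρ0 ρ1 (k + 1) ω} ∧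
      errB S P1 ≤ ENNReal.ofReal (Real.exp (-B))) := by
  have hAB : -A < B := by linarith
  refine ⟨⟨?_, ?_⟩, ⟨?_, ?_⟩⟩
  · simp only [errA, decidesAt, hsprt.dec_eq_some_true_iff hAB, Sfun_eq_sum_pref]
  · exact measure_exists_decidesAt_le hfs0 hfs1 hP0 hP1 fun k h hdec =>
      ((hsprt.dec_eq_some_true_iff hAB h).mp hdec).2
  · simp only [errB, decidesAt, hsprt.dec_eq_some_false_iff, Sfun_eq_sum_pref]
  · refine measure_exists_decidesAt_le hfs1 hfs0 hP1 hP0 fun k h hdec => ?_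
    have hle := ((hsprt.dec_eq_some_false_iff h).mp hdec).2
    simpa only [Zfun_swap ρ0 ρ1, Finset.sum_neg_distrib, neg_le_neg_iff] using hle

/-- for an SQPRT with parameters `A, B > 0` whose stopping time is
a.s. finite under both hypotheses, `α = P_0(S_T ≤ −A) ≤ e^{−A}` and
`β = P_1(S_T ≥ B) ≤ e^{−B}`. -/
theorem sqprt_error_bounds
    (d : ℕ) (hd : 0 < d) (ρ0 ρ1 : Mat (Fin d))
    (h0 : IsState ρ0) (h1 : IsState ρ1)
    (hfs0 : ρ0.PosDef) (hfs1 : ρ1.PosDef)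
    (S : SQHTtest (Fin d)) (A B : ℝ) (hA : 0 < A) (hB : 0 < B)
    (hsprt : IsSQPRT ρ0 ρ1 S A B)
    (P0 P1 : Measure (Traj (Fin d) S.N))
    (hP0 : IsLaw ρ0 S P0) (hP1 : IsLaw ρ1 S P1)
    (hfin0 : P0 {ω | ∀ k, S.dec k (pref (k + 1) ω) = none} = 0)
    (hfin1 : P1 {ω | ∀ k, S.dec k (pref (k + 1) ω) = none} = 0) :
    (errA S P0 = P0 {ω | ∃ k, (∀ j, j < k → S.dec j (pref (j + 1) ω) = none) ∧
        S.dec k (pref (k + 1) ω) ≠ none ∧ Sfun ρ0 ρ1 (k + 1) ω ≤ -A} ∧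
      errA S P0 ≤ ENNReal.ofReal (Real.exp (-A))) ∧
    (errB S P1 = P1 {ω | ∃ k, (∀ j, j < k → S.dec j (pref (j + 1) ω) = none) ∧
        S.dec k (pref (k + 1) ω) ≠ none ∧ B ≤ Sfun ρ0 ρ1 (k + 1) ω} ∧
      errB S P1 ≤ ENNReal.ofReal (Real.exp (-B))) :=
  sqprt_error_bounds_general d ρ0 ρ1 hfs0 hfs1 S A B hA hB hsprt P0 P1 hP0 hP1

end SQHT
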